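/- arXiv:1706.08892 — 6 statements merged into one kernel-verified Lean document; each statement's English description precedes it below -/
import Mathlib

section
/- Let a, b : [0,∞) → ℝ be continuous with a(t) ≤ A and 0 < b₁ < b(t) < b₂ for all t ≥ 0, where A, b₁, b₂ are positive constants. Let z : [0,∞) → ℝ be differentiable with z'(t) = a(t)z(t) − b(t)z(t)² for all t ≥ 0 and z(0) > 0. Then z is bounded on [0,∞) and ∫₀^∞ z(t) dt = ∞ if and only if ∫₀^∞ b(t) exp(∫₀^t a(s) ds) dt = ∞. -/
/-!
The solution stays positive, since it solves the linear equation `z' = (a - b z) z`.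
Then the reciprocal `w = 1 / z` solves the linear equation `w' = -a w + b`, so
`(μ / z)' = b μ` and `μ / z = 1 / z(0) + ∫₀ᵗ b μ`. Writing `G = ∫₀ᵗ b μ`, this gives
`(log (1 + z(0) G))' = b z`; since `b₁ < b < b₂`, `∫₀ᵀ z` and `log (1 + z(0) G(T))` diverge
together, hence so do `∫₀ᵀ z` and `G(T)`. Boundedness comes from `μ' = a μ ≤ (A / b₁) b μ`,
i.e. `μ ≤ 1 + (A / b₁) G`.
-/

open Real Filter MeasureTheory Set intervalIntegral

theorem hasDerivWithinAt_integral_Ici {f : ℝ → ℝ} {x₀ t : ℝ} (hf : ContinuousOn f (Ici x₀))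
    (ht : t ∈ Ici x₀) :
    HasDerivWithinAt (fun u => ∫ x in x₀..u, f x) (f t) (Ici x₀) t := by
  have hsub : Icc x₀ (t + 1) ⊆ Ici x₀ := Icc_subset_Ici_self
  have : Fact (t ∈ Icc x₀ (t + 1)) := ⟨⟨ht, by linarith⟩⟩
  have hint : IntervalIntegrable f volume x₀ t := (hf.mono <| by
    rw [uIcc_of_le (mem_Ici.1 ht)]; exact Icc_subset_Ici_self).intervalIntegrable
  refine (integral_hasDerivWithinAt_right (s := Icc x₀ (t + 1)) hint
    ((hf.mono hsub).stronglyMeasurableAtFilter_nhdsWithin measurableSet_Icc t)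
    ((hf t ht).mono hsub)).mono_of_mem_nhdsWithin ?_
  rw [← Ici_inter_Iic]
  exact inter_mem_nhdsWithin _ (Iic_mem_nhds (lt_add_one t))

theorem eq_of_hasDerivWithinAt_Ici_zero {f : ℝ → ℝ} {x₀ : ℝ}
    (hf : ∀ t ∈ Ici x₀, HasDerivWithinAt f 0 (Ici x₀) t) : ∀ t ∈ Ici x₀, f t = f x₀ :=
  fun t ht => constant_of_has_deriv_right_zero
    (fun x hx => (hf x hx.1).continuousWithinAt.mono Icc_subset_Ici_self)
    (fun x hx => (hf x hx.1).mono (Ici_subset_Ici.2 hx.1)) t ⟨ht, le_rfl⟩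

theorem le_of_hasDerivWithinAt_Ici {f g f' g' : ℝ → ℝ} {x₀ : ℝ}
    (hf : ∀ t ∈ Ici x₀, HasDerivWithinAt f (f' t) (Ici x₀) t)
    (hg : ∀ t ∈ Ici x₀, HasDerivWithinAt g (g' t) (Ici x₀) t)
    (h₀ : f x₀ ≤ g x₀) (hle : ∀ t ∈ Ici x₀, f' t ≤ g' t) : ∀ t ∈ Ici x₀, f t ≤ g t :=
  fun t ht => image_le_of_deriv_right_le_deriv_boundary
    (fun x hx => (hf x hx.1).continuousWithinAt.mono Icc_subset_Ici_self)
    (fun x hx => (hf x hx.1).mono (Ici_subset_Ici.2 hx.1)) h₀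
    (fun x hx => (hg x hx.1).continuousWithinAt.mono Icc_subset_Ici_self)
    (fun x hx => (hg x hx.1).mono (Ici_subset_Ici.2 hx.1)) (fun x hx => hle x hx.1) (x := t) ⟨ht, le_rfl⟩

theorem tendsto_log_one_add_mul_atTop_iff {α : Type*} {l : Filter α} {f : α → ℝ} {c : ℝ}
    (hc : 0 < c) (hf : ∀ᶠ x in l, 0 ≤ f x) :
    Tendsto (fun x => log (1 + c * f x)) l atTop ↔ Tendsto f l atTop := by
  refine ⟨fun h => (tendsto_const_mul_atTop_of_pos hc).1 (tendsto_atTop_mono' l ?_ h), fun h =>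
    tendsto_log_atTop.comp (tendsto_atTop_add_const_left l 1
      ((tendsto_const_mul_atTop_of_pos hc).2 h))⟩
  filter_upwards [hf] with x hx
  have := log_le_sub_one_of_pos (x := 1 + c * f x) (by positivity)
  linarith

noncomputable def integratingFactor (a : ℝ → ℝ) (t : ℝ) : ℝ := exp (∫ s in (0:ℝ)..t, a s)

noncomputable def weightedIntegral (a b : ℝ → ℝ) (t : ℝ) : ℝ :=
  ∫ s in (0:ℝ)..t, b s * integratingFactor a s

section IntegratingFactor

variable {a b : ℝ → ℝ}

@[simp]
theorem integratingFactor_zero (a : ℝ → ℝ) : integratingFactor a 0 = 1 := by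
  simp [integratingFactor]

theorem integratingFactor_pos (a : ℝ → ℝ) (t : ℝ) : 0 < integratingFactor a t := exp_pos _

theorem hasDerivWithinAt_integratingFactor (ha : ContinuousOn a (Ici 0)) {t : ℝ}
    (ht : t ∈ Ici (0:ℝ)) :
    HasDerivWithinAt (integratingFactor a) (a t * integratingFactor a t) (Ici 0) t := by
  rw [mul_comm]
  exact (hasDerivWithinAt_integral_Ici ha ht).exp

theorem continuousOn_integratingFactor (ha : ContinuousOn a (Ici 0)) :
    ContinuousOn (integratingFactor a) (Ici 0) :=
  fun _ ht => (hasDerivWithinAt_integratingFactor ha ht).continuousWithinAt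

@[simp]
theorem weightedIntegral_zero (a b : ℝ → ℝ) : weightedIntegral a b 0 = 0 := by
  simp [weightedIntegral]

theorem weightedIntegral_nonneg (hb : ∀ t ≥ (0:ℝ), 0 ≤ b t) {T : ℝ} (hT : 0 ≤ T) :
    0 ≤ weightedIntegral a b T :=
  integral_nonneg hT fun s hs => mul_nonneg (hb s hs.1) (integratingFactor_pos a s).le

theorem hasDerivWithinAt_weightedIntegral (ha : ContinuousOn a (Ici 0))
    (hb : ContinuousOn b (Ici 0)) {t : ℝ} (ht : t ∈ Ici (0:ℝ)) :
    HasDerivWithinAt (weightedIntegral a b) (b t * integratingFactor a t) (Ici 0) t :=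
  hasDerivWithinAt_integral_Ici (hb.mul (continuousOn_integratingFactor ha)) ht

theorem eq_mul_integratingFactor {c z : ℝ → ℝ} (hc : ContinuousOn c (Ici 0))
    (hz : ∀ t ∈ Ici (0:ℝ), HasDerivWithinAt z (c t * z t) (Ici 0) t) :
    ∀ t ∈ Ici (0:ℝ), z t = z 0 * integratingFactor c t := by
  have hconst := eq_of_hasDerivWithinAt_Ici_zero (f := fun t => z t / integratingFactor c t)
    fun t ht => by
      refine ((hz t ht).fun_div (hasDerivWithinAt_integratingFactor hc ht)
        (integratingFactor_pos c t).ne').congr_deriv ?_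
      ring
  intro t ht
  have := hconst t ht
  simp only [integratingFactor_zero, div_one] at this
  rw [← this, div_mul_cancel₀ _ (integratingFactor_pos c t).ne']

theorem integratingFactor_le (ha : ContinuousOn a (Ici 0)) (hb : ContinuousOn b (Ici 0))
    {A b₁ : ℝ} (hA : 0 ≤ A) (hb₁ : 0 < b₁) (haA : ∀ t ≥ (0:ℝ), a t ≤ A)
    (hbb₁ : ∀ t ≥ (0:ℝ), b₁ ≤ b t) :
    ∀ t ≥ (0:ℝ), integratingFactor a t ≤ 1 + A / b₁ * weightedIntegral a b t := by
  refine le_of_hasDerivWithinAt_Ici (fun t ht => hasDerivWithinAt_integratingFactor ha ht)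
    (fun t ht => ((hasDerivWithinAt_weightedIntegral ha hb ht).const_mul (A / b₁)).const_add 1)
    (by simp) fun t ht => ?_
  have hA_le : A ≤ A / b₁ * b t := by
    rw [div_mul_eq_mul_div, le_div_iff₀ hb₁]
    exact mul_le_mul_of_nonneg_left (hbb₁ t ht) hA
  rw [← mul_assoc]
  exact mul_le_mul_of_nonneg_right ((haA t ht).trans hA_le) (integratingFactor_pos a t).le

end IntegratingFactor

section Logistic

variable {a b z : ℝ → ℝ}

theorem logistic_pos (ha : ContinuousOn a (Ici 0)) (hb : ContinuousOn b (Ici 0))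
    (hz : ∀ t ≥ (0:ℝ), HasDerivWithinAt z (a t * z t - b t * z t ^ 2) (Ici 0) t)
    (hz0 : 0 < z 0) : ∀ t ≥ (0:ℝ), 0 < z t := by
  have hc : ContinuousOn (fun t => a t - b t * z t) (Ici 0) :=
    ha.sub (hb.mul fun t ht => (hz t ht).continuousWithinAt)
  intro t ht
  rw [eq_mul_integratingFactor (z := z) hc (fun s hs => by convert hz s hs using 1; ring) t ht]
  exact mul_pos hz0 (integratingFactor_pos _ _)

theorem integratingFactor_div_logistic (ha : ContinuousOn a (Ici 0))
    (hb : ContinuousOn b (Ici 0))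
    (hz : ∀ t ≥ (0:ℝ), HasDerivWithinAt z (a t * z t - b t * z t ^ 2) (Ici 0) t)
    (hz0 : 0 < z 0) :
    ∀ t ≥ (0:ℝ), integratingFactor a t / z t = (z 0)⁻¹ + weightedIntegral a b t := by
  have hconst := eq_of_hasDerivWithinAt_Ici_zero
    (f := fun t => integratingFactor a t / z t - weightedIntegral a b t) fun t ht => by
      have hzt := (logistic_pos ha hb hz hz0 t ht).ne'
      refine (((hasDerivWithinAt_integratingFactor ha ht).fun_div (hz t ht) hzt).fun_sub
        (hasDerivWithinAt_weightedIntegral ha hb ht)).congr_deriv ?_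
      field_simp
      ring
  intro t ht
  have := hconst t ht
  simp only [integratingFactor_zero, weightedIntegral_zero, sub_zero, one_div] at this
  linarith

theorem logistic_le_max (ha : ContinuousOn a (Ici 0)) (hb : ContinuousOn b (Ici 0))
    (hz : ∀ t ≥ (0:ℝ), HasDerivWithinAt z (a t * z t - b t * z t ^ 2) (Ici 0) t)
    (hz0 : 0 < z 0) {A b₁ : ℝ} (hA : 0 ≤ A) (hb₁ : 0 < b₁) (haA : ∀ t ≥ (0:ℝ), a t ≤ A)
    (hbb₁ : ∀ t ≥ (0:ℝ), b₁ ≤ b t) : ∀ t ≥ (0:ℝ), z t ≤ max (z 0) (A / b₁) := by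
  intro t ht
  have hzt := logistic_pos ha hb hz hz0 t ht
  have hG := weightedIntegral_nonneg (a := a) (fun s hs => hb₁.le.trans (hbb₁ s hs)) ht
  have hμ := integratingFactor_le ha hb hA hb₁ haA hbb₁ t ht
  have hW := integratingFactor_div_logistic ha hb hz hz0 t ht
  rw [div_eq_iff hzt.ne'] at hW
  set m := max (z 0) (A / b₁)
  have hm₁ : 1 ≤ m * (z 0)⁻¹ := by
    rw [← div_eq_mul_inv, le_div_iff₀ hz0, one_mul]; exact le_max_left _ _
  have hm₂ : A / b₁ * weightedIntegral a b t ≤ m * weightedIntegral a b t :=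
    mul_le_mul_of_nonneg_right (le_max_right _ _) hG
  have hWpos : 0 < (z 0)⁻¹ + weightedIntegral a b t := by positivity
  refine le_of_mul_le_mul_left ?_ hWpos
  rw [← hW]
  linarith

theorem hasDerivWithinAt_log_logistic (ha : ContinuousOn a (Ici 0))
    (hb : ContinuousOn b (Ici 0))
    (hz : ∀ t ≥ (0:ℝ), HasDerivWithinAt z (a t * z t - b t * z t ^ 2) (Ici 0) t)
    (hz0 : 0 < z 0) :
    ∀ t ∈ Ici (0:ℝ), HasDerivWithinAt (fun T => log (1 + z 0 * weightedIntegral a b T))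
      (b t * z t) (Ici 0) t := by
  intro t ht
  have hzt := logistic_pos ha hb hz hz0 t ht
  have hW := integratingFactor_div_logistic ha hb hz hz0 t ht
  have hpos : 0 < 1 + z 0 * weightedIntegral a b t := by
    have : 0 < integratingFactor a t / z t := div_pos (integratingFactor_pos a t) hzt
    nlinarith [mul_inv_cancel₀ hz0.ne']
  convert (((hasDerivWithinAt_weightedIntegral ha hb ht).const_mul (z 0)).const_add 1).log
    hpos.ne' using 1
  rw [eq_div_iff hpos.ne', ← mul_inv_cancel₀ hz0.ne', ← mul_add, ← hW]
  field_simp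

end Logistic

theorem stmt1 (a b z : ℝ → ℝ) (A b₁ b₂ : ℝ)
    (hA : 0 < A) (hb₁ : 0 < b₁) (hb₂ : 0 < b₂)
    (ha : ContinuousOn a (Set.Ici (0:ℝ)))
    (hb : ContinuousOn b (Set.Ici (0:ℝ)))
    (haA : ∀ t ≥ (0:ℝ), a t ≤ A)
    (hbB : ∀ t ≥ (0:ℝ), b₁ < b t ∧ b t < b₂)
    (hz : ∀ t ≥ (0:ℝ), HasDerivWithinAt z (a t * z t - b t * z t ^ 2) (Set.Ici (0:ℝ)) t)
    (hz0 : z 0 > 0) :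
    ((∃ M : ℝ, ∀ t ≥ (0:ℝ), |z t| ≤ M) ∧
      Tendsto (fun T => ∫ t in (0:ℝ)..T, z t) atTop atTop) ↔
    Tendsto (fun T => ∫ t in (0:ℝ)..T, b t * Real.exp (∫ s in (0:ℝ)..t, a s)) atTop atTop := by
  have hz_pos := logistic_pos ha hb hz hz0
  have hZ : ∀ t ∈ Ici (0:ℝ), HasDerivWithinAt (fun T => ∫ s in (0:ℝ)..T, z s) (z t) (Ici 0) t :=
    fun t ht => hasDerivWithinAt_integral_Ici (fun s hs => (hz s hs).continuousWithinAt) ht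
  have hL := hasDerivWithinAt_log_logistic ha hb hz hz0
  have lower : ∀ T ∈ Ici (0:ℝ),
      b₁ * ∫ t in (0:ℝ)..T, z t ≤ log (1 + z 0 * weightedIntegral a b T) :=
    le_of_hasDerivWithinAt_Ici (fun t ht => (hZ t ht).const_mul b₁) hL (by simp)
    fun t ht => mul_le_mul_of_nonneg_right (hbB t ht).1.le (hz_pos t ht).le
  have upper : ∀ T ∈ Ici (0:ℝ),
      log (1 + z 0 * weightedIntegral a b T) ≤ b₂ * ∫ t in (0:ℝ)..T, z t :=
    le_of_hasDerivWithinAt_Ici hL (fun t ht => (hZ t ht).const_mul b₂) (by simp)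
    fun t ht => mul_le_mul_of_nonneg_right (hbB t ht).2.le (hz_pos t ht).le
  change _ ↔ Tendsto (weightedIntegral a b) atTop atTop
  rw [← tendsto_log_one_add_mul_atTop_iff hz0 ((eventually_ge_atTop 0).mono fun T hT =>
    weightedIntegral_nonneg (fun t ht => hb₁.le.trans (hbB t ht).1.le) hT)]
  constructor
  · rintro ⟨-, hZ_top⟩
    exact tendsto_atTop_mono' _ ((eventually_ge_atTop 0).mono lower)
      (hZ_top.const_mul_atTop hb₁)
  · intro hL_top
    refine ⟨⟨max (z 0) (A / b₁), fun t ht => ?_⟩, ?_⟩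
    · rw [abs_of_pos (hz_pos t ht)]
      exact logistic_le_max ha hb hz hz0 hA.le hb₁ haA (fun s hs => (hbB s hs).1.le) t ht
    · exact (tendsto_const_mul_atTop_of_pos hb₂).1
        (tendsto_atTop_mono' _ ((eventually_ge_atTop 0).mono upper) hL_top)
end

section
/- Let a, b : [0,∞) → ℝ be continuous with a(t) ≤ A and 0 < b₁ < b(t) < b₂ for all t ≥ 0, where A, b₁, b₂ are positive constants, and assume ∫₀^∞ b(t) exp(∫₀^t a(s) ds) dt = ∞. Then there is no differentiable z : [0,∞) → ℝ with z'(t) = a(t)z(t) − b(t)z(t)² for all t ≥ 0 and z(0) < 0; that is, every solution with negative initial value goes to −∞ in finite time. -/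
/-!
With `μ t = exp ∫₀ᵗ a` and `J t = ∫₀ᵗ b μ`, the substitution `w = μ / z` linearises the
logistic equation to `w' = b μ`. To avoid dividing by `z` before knowing that it does not
vanish, one checks instead that `h = μ - z (z(0)⁻¹ + J)` solves the linear equation
`h' = (a - b z) h` with `h 0 = 0`, so `h ≡ 0` by Grönwall. Hence `z (z(0)⁻¹ + J) = μ > 0` on
`[0, ∞)`; but `J` is continuous, starts at `0` and tends to `∞`, so it takes the value
`-z(0)⁻¹ > 0`, where the left-hand side vanishes.
-/

open Real Filter MeasureTheory Set intervalIntegral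

section

variable {E : Type*} [NormedAddCommGroup E] [NormedSpace ℝ E]

theorem hasDerivWithinAt_integral_of_continuousOn_Ici [CompleteSpace E] {f : ℝ → E}
    {t₀ x : ℝ} (hf : ContinuousOn f (Ici t₀)) (hx : t₀ ≤ x) :
    HasDerivWithinAt (fun t => ∫ s in t₀..t, f s) (f x) (Ici t₀) x := by
  rcases hx.eq_or_lt with rfl | hx
  · exact integral_hasDerivWithinAt_right IntervalIntegrable.refl
      ((hf.mono Ioi_subset_Ici_self).stronglyMeasurableAtFilter_nhdsWithin measurableSet_Ioi t₀)
      ((hf t₀ self_mem_Ici).mono Ioi_subset_Ici_self)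
  · have hint : IntervalIntegrable f volume t₀ x :=
      (hf.mono (by rw [uIcc_of_le hx.le]; exact Icc_subset_Ici_self)).intervalIntegrable
    exact (integral_hasDerivAt_right hint
      ((hf.mono Ioi_subset_Ici_self).stronglyMeasurableAtFilter isOpen_Ioi x hx)
      (hf.continuousAt (Ici_mem_nhds hx))).hasDerivWithinAt

theorem eq_zero_of_hasDerivWithinAt_smul_self {k : ℝ → ℝ} {h : ℝ → E} {t₀ : ℝ}
    (hk : ContinuousOn k (Ici t₀))
    (hh : ∀ t ≥ t₀, HasDerivWithinAt h (k t • h t) (Ici t₀) t) (h₀ : h t₀ = 0) :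
    ∀ t ≥ t₀, h t = 0 := by
  intro T hT
  obtain ⟨C, hC⟩ :=
    isCompact_Icc.exists_bound_of_continuousOn (hk.mono (Icc_subset_Ici_self : Icc t₀ T ⊆ _))
  refine eq_zero_of_abs_deriv_le_mul_abs_self_of_eq_zero_right (K := C)
    (fun t ht => (hh t ht.1).continuousWithinAt.mono Icc_subset_Ici_self)
    (fun t ht => (hh t ht.1).mono (Ici_subset_Ici.2 ht.1)) h₀ (fun t ht => ?_) T ⟨hT, le_rfl⟩
  rw [norm_smul]
  exact mul_le_mul_of_nonneg_right (hC t (Ico_subset_Icc_self ht)) (norm_nonneg _)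

end

theorem hasDerivWithinAt_integral_mul_exp_integral {a b : ℝ → ℝ} {t : ℝ}
    (ha : ContinuousOn a (Ici 0)) (hb : ContinuousOn b (Ici 0)) (ht : 0 ≤ t) :
    HasDerivWithinAt (fun t => ∫ s in (0:ℝ)..t, b s * exp (∫ r in (0:ℝ)..s, a r))
      (b t * exp (∫ r in (0:ℝ)..t, a r)) (Ici 0) t :=
  hasDerivWithinAt_integral_of_continuousOn_Ici (hb.mul fun _ hs =>
    (hasDerivWithinAt_integral_of_continuousOn_Ici ha hs).exp.continuousWithinAt) ht

theorem logistic_mul_eq_exp_integral {a b z : ℝ → ℝ}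
    (ha : ContinuousOn a (Ici 0)) (hb : ContinuousOn b (Ici 0))
    (hz : ∀ t ≥ (0:ℝ), HasDerivWithinAt z (a t * z t - b t * z t ^ 2) (Ici 0) t)
    (hz₀ : z 0 ≠ 0) :
    ∀ t ≥ (0:ℝ),
      z t * ((z 0)⁻¹ + ∫ s in (0:ℝ)..t, b s * exp (∫ r in (0:ℝ)..s, a r)) =
        exp (∫ s in (0:ℝ)..t, a s) := by
  set μ : ℝ → ℝ := fun t => exp (∫ s in (0:ℝ)..t, a s)
  set J : ℝ → ℝ := fun t => ∫ s in (0:ℝ)..t, b s * μ s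
  have hμ : ∀ t ≥ (0:ℝ), HasDerivWithinAt μ (μ t * a t) (Ici 0) t := fun t ht =>
    (hasDerivWithinAt_integral_of_continuousOn_Ici ha ht).exp
  have hzc : ContinuousOn z (Ici 0) := fun t ht => (hz t ht).continuousWithinAt
  have hlin : ∀ t ≥ (0:ℝ), HasDerivWithinAt (fun s => μ s - z s * ((z 0)⁻¹ + J s))
      ((a t - b t * z t) • (μ t - z t * ((z 0)⁻¹ + J t))) (Ici 0) t := by
    intro t ht
    have hJ := hasDerivWithinAt_integral_mul_exp_integral ha hb ht
    exact ((hμ t ht).sub ((hz t ht).mul (hJ.const_add (z 0)⁻¹))).congr_deriv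
      (by rw [smul_eq_mul]; ring)
  intro t ht
  have := eq_zero_of_hasDerivWithinAt_smul_self (ha.sub (hb.mul hzc)) hlin
    (by simp [μ, J, mul_inv_cancel₀ hz₀]) t ht
  exact (sub_eq_zero.1 this).symm

theorem stmt3_general (a b : ℝ → ℝ)
    (ha : ContinuousOn a (Set.Ici (0:ℝ)))
    (hb : ContinuousOn b (Set.Ici (0:ℝ)))
    (hJ : Tendsto (fun T => ∫ t in (0:ℝ)..T, b t * Real.exp (∫ s in (0:ℝ)..t, a s))
      atTop atTop) :
    ¬ ∃ z : ℝ → ℝ,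
      (∀ t ≥ (0:ℝ), HasDerivWithinAt z (a t * z t - b t * z t ^ 2) (Set.Ici (0:ℝ)) t) ∧
      z 0 < 0 := by
  rintro ⟨z, hz, hz₀⟩
  set J : ℝ → ℝ := fun T => ∫ t in (0:ℝ)..T, b t * Real.exp (∫ s in (0:ℝ)..t, a s)
  have hJc : ContinuousOn J (Ici 0) := fun t ht =>
    (hasDerivWithinAt_integral_mul_exp_integral ha hb ht).continuousWithinAt
  obtain ⟨T, hJT, hT⟩ :=
    ((hJ.eventually_ge_atTop (-(z 0)⁻¹)).and (eventually_ge_atTop 0)).exists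
  obtain ⟨t, ht, hJt⟩ : -(z 0)⁻¹ ∈ J '' Icc 0 T :=
    intermediate_value_Icc hT (hJc.mono Icc_subset_Ici_self)
      ⟨by simpa [J] using (inv_lt_zero.2 hz₀).le, hJT⟩
  have hμ := logistic_mul_eq_exp_integral ha hb hz hz₀.ne t ht.1
  rw [show (z 0)⁻¹ + J t = 0 by linarith, mul_zero] at hμ
  exact (exp_pos _).ne hμ

theorem stmt3 (a b : ℝ → ℝ) (A b₁ b₂ : ℝ)
    (hA : 0 < A) (hb₁ : 0 < b₁) (hb₂ : 0 < b₂)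
    (ha : ContinuousOn a (Set.Ici (0:ℝ)))
    (hb : ContinuousOn b (Set.Ici (0:ℝ)))
    (haA : ∀ t ≥ (0:ℝ), a t ≤ A)
    (hbB : ∀ t ≥ (0:ℝ), b₁ < b t ∧ b t < b₂)
    (hJ : Tendsto (fun T => ∫ t in (0:ℝ)..T, b t * Real.exp (∫ s in (0:ℝ)..t, a s))
      atTop atTop) :
    ¬ ∃ z : ℝ → ℝ,
      (∀ t ≥ (0:ℝ), HasDerivWithinAt z (a t * z t - b t * z t ^ 2) (Set.Ici (0:ℝ)) t) ∧
      z 0 < 0 :=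
  stmt3_general a b ha hb hJ
end

section
/- Let a, b : [0,∞) → ℝ be continuous with a(t) ≤ A and 0 < b₁ < b(t) < b₂ for all t ≥ 0, where A, b₁, b₂ are positive constants, and assume J := ∫₀^∞ b(t) exp(∫₀^t a(s) ds) dt < ∞. Then the solution z(t) = μ(t)/(−J + ∫₀^t b(s)μ(s) ds) of z'(t) = a(t)z(t) − b(t)z(t)², with z(0) = −1/J and μ(t) = exp(∫₀^t a(s) ds), satisfies ∫₀^∞ z(t) dt = −∞; in particular this solution is separated from the zero solution. -/
open Real Filter MeasureTheory Set intervalIntegral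

open Topology

/-! With `g = b μ` and the tail `G t = ∫_t^∞ g`, the solution is `z = -μ / G = -(g / G) / b`.
Since `G' = -g`, the integral of `g / G` over `[0, T]` equals `log G 0 - log G T`, which tends
to `+∞` because `G T → 0⁺`. As `b < b₂`, `z ≤ -(g / G) / b₂`, hence `∫₀^T z → -∞`. -/

theorem ContinuousOn.continuousOn_primitive_Ici {f : ℝ → ℝ} {c : ℝ} (hf : ContinuousOn f (Ici c)) :
    ContinuousOn (fun x => ∫ t in c..x, f t) (Ici c) := by
  intro x (hx : c ≤ x)
  have hIcc : ContinuousOn (fun x => ∫ t in c..x, f t) (Icc c (x + 1)) := by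
    have hcx : uIcc c (x + 1) = Icc c (x + 1) := uIcc_of_le (by linarith)
    have hii : IntervalIntegrable f volume c (x + 1) :=
      (hf.mono (hcx ▸ Icc_subset_Ici_self)).intervalIntegrable
    simpa only [hcx] using continuousOn_primitive_interval' hii left_mem_uIcc
  refine (hIcc x ⟨hx, by linarith⟩).mono_of_mem_nhdsWithin ?_
  exact mem_nhdsWithin.2 ⟨Iio (x + 1), isOpen_Iio, by simp, fun y hy => ⟨hy.2, hy.1.le⟩⟩

section Tail

variable {g : ℝ → ℝ} {c : ℝ}

theorem integral_Ioi_pos (hint : IntegrableOn g (Ioi c)) (hpos : ∀ t > c, 0 < g t) {T : ℝ}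
    (hT : c ≤ T) : 0 < ∫ t in Ioi T, g t := by
  have hpos' : ∀ t ∈ Ioi T, 0 < g t := fun t ht => hpos t (hT.trans_lt ht)
  refine (setIntegral_pos_iff_support_of_nonneg_ae ?_ (hint.mono_set (Ioi_subset_Ioi hT))).2 ?_
  · filter_upwards [self_mem_ae_restrict measurableSet_Ioi] with t ht using (hpos' t ht).le
  · have hsupp : Function.support g ∩ Ioi T = Ioi T :=
      inter_eq_right.2 fun t ht => (hpos' t ht).ne'
    simp [hsupp]

theorem hasDerivAt_integral_Ioi (hint : IntegrableOn g (Ioi c)) (hg : ContinuousOn g (Ioi c))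
    {x : ℝ} (hx : c < x) : HasDerivAt (fun T => ∫ t in Ioi T, g t) (-g x) x := by
  have hprim : HasDerivAt (fun T => ∫ t in c..T, g t) (g x) x :=
    integral_hasDerivAt_right
      ((intervalIntegrable_iff_integrableOn_Ioc_of_le hx.le).2 (hint.mono_set Ioc_subset_Ioi_self))
      (hg.stronglyMeasurableAtFilter isOpen_Ioi x hx) (hg.continuousAt (Ioi_mem_nhds hx))
  refine (hprim.const_sub (∫ t in Ioi c, g t)).congr_of_eventuallyEq ?_
  filter_upwards [Ioi_mem_nhds hx] with T hT
  rw [← integral_Ioi_sub_Ioi hint hT.le, sub_sub_cancel]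

theorem continuousOn_div_integral_Ioi (hint : IntegrableOn g (Ioi c))
    (hg : ContinuousOn g (Ici c)) (hpos : ∀ t > c, 0 < g t) :
    ContinuousOn (fun t => g t / ∫ s in Ioi t, g s) (Ici c) :=
  hg.div hint.continuousOn_Ici_primitive_Ioi fun _ ht => (integral_Ioi_pos hint hpos ht).ne'

theorem integral_div_integral_Ioi_eq_log_sub_log (hint : IntegrableOn g (Ioi c))
    (hg : ContinuousOn g (Ici c)) (hpos : ∀ t > c, 0 < g t) {T : ℝ} (hT : c ≤ T) :
    ∫ t in c..T, g t / ∫ s in Ioi t, g s = log (∫ s in Ioi c, g s) - log (∫ s in Ioi T, g s) := by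
  have hlog : ∀ x ∈ Ioo c T,
      HasDerivAt (fun t => log (∫ s in Ioi t, g s)) (-(g x / ∫ s in Ioi x, g s)) x := fun x hx => by
    simpa only [neg_div] using (hasDerivAt_integral_Ioi hint (hg.mono Ioi_subset_Ici_self)
      hx.1).log (integral_Ioi_pos hint hpos hx.1.le).ne'
  have hcont : ContinuousOn (fun t => log (∫ s in Ioi t, g s)) (Icc c T) :=
    (hint.continuousOn_Ici_primitive_Ioi.mono Icc_subset_Ici_self).log
      fun t ht => (integral_Ioi_pos hint hpos ht.1).ne'
  have hftc := integral_eq_sub_of_hasDerivAt_of_le hT hcont hlog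
    ((continuousOn_div_integral_Ioi hint hg hpos).mono
      (uIcc_of_le hT ▸ Icc_subset_Ici_self)).intervalIntegrable.neg
  rw [intervalIntegral.integral_neg] at hftc
  linarith

theorem tendsto_integral_div_integral_Ioi_atTop (hint : IntegrableOn g (Ioi c))
    (hg : ContinuousOn g (Ici c)) (hpos : ∀ t > c, 0 < g t) :
    Tendsto (fun T => ∫ t in c..T, g t / ∫ s in Ioi t, g s) atTop atTop := by
  have htail : Tendsto (fun T => ∫ s in Ioi T, g s) atTop (𝓝[>] 0) :=
    tendsto_nhdsWithin_iff.2 ⟨tendsto_integral_Ioi_zero tendsto_id,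
      (eventually_ge_atTop c).mono fun T hT => integral_Ioi_pos hint hpos hT⟩
  refine (tendsto_atTop_add_const_left _ (log (∫ s in Ioi c, g s))
    (tendsto_neg_atBot_atTop.comp (tendsto_log_nhdsGT_zero.comp htail))).congr' ?_
  filter_upwards [eventually_ge_atTop c] with T hT
  rw [integral_div_integral_Ioi_eq_log_sub_log hint hg hpos hT]
  rfl

end Tail

theorem stmt6_general (a b : ℝ → ℝ) (b₁ b₂ J : ℝ)
    (hb₁ : 0 < b₁) (hb₂ : 0 < b₂)
    (ha : ContinuousOn a (Set.Ici (0:ℝ)))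
    (hb : ContinuousOn b (Set.Ici (0:ℝ)))
    (hbB : ∀ t ≥ (0:ℝ), b₁ < b t ∧ b t < b₂)
    (hint : IntegrableOn (fun t => b t * Real.exp (∫ s in (0:ℝ)..t, a s)) (Set.Ioi (0:ℝ)))
    (hJ : J = ∫ t in Set.Ioi (0:ℝ), b t * Real.exp (∫ s in (0:ℝ)..t, a s))
    (z : ℝ → ℝ)
    (hz : ∀ t ≥ (0:ℝ), z t = Real.exp (∫ s in (0:ℝ)..t, a s) /
      (-J + ∫ s in (0:ℝ)..t, b s * Real.exp (∫ u in (0:ℝ)..s, a u))) :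
    Tendsto (fun T => ∫ t in (0:ℝ)..T, z t) atTop atBot := by
  set g : ℝ → ℝ := fun t => b t * exp (∫ s in (0:ℝ)..t, a s)
  have hb_pos : ∀ t ≥ 0, 0 < b t := fun t ht => hb₁.trans (hbB t ht).1
  have hg_pos : ∀ t > 0, 0 < g t := fun t ht => mul_pos (hb_pos t ht.le) (exp_pos _)
  have hg_cont : ContinuousOn g (Ici 0) :=
    hb.mul (continuous_exp.comp_continuousOn ha.continuousOn_primitive_Ici)
  have hz_eq : ∀ t ≥ 0, z t = -(g t / ∫ s in Ioi t, g s) / b t := by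
    intro t ht
    rw [hz t ht, hJ, ← integral_Ioi_sub_Ioi hint ht]
    field_simp [(hb_pos t ht).ne']
    ring
  have hz_le : ∀ t ≥ 0, z t ≤ -b₂⁻¹ * (g t / ∫ s in Ioi t, g s) := by
    intro t ht
    have hq : 0 < g t / ∫ s in Ioi t, g s :=
      div_pos (mul_pos (hb_pos t ht) (exp_pos _)) (integral_Ioi_pos hint hg_pos ht)
    rw [hz_eq t ht, neg_div, neg_mul, neg_le_neg_iff, inv_mul_eq_div]
    exact div_le_div_of_nonneg_left hq.le (hb_pos t ht) (hbB t ht).2.le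
  have hq_cont := continuousOn_div_integral_Ioi hint hg_cont hg_pos
  have hz_cont : ContinuousOn z (Ici 0) :=
    (hq_cont.neg.div hb fun t ht => (hb_pos t ht).ne').congr hz_eq
  refine tendsto_atBot_mono' atTop ?_
    ((tendsto_integral_div_integral_Ioi_atTop hint hg_cont hg_pos).const_mul_atTop_of_neg
      (neg_lt_zero.2 (inv_pos.2 hb₂)))
  filter_upwards [eventually_ge_atTop 0] with T hT
  rw [← intervalIntegral.integral_const_mul]
  have hsub : uIcc 0 T ⊆ Ici 0 := uIcc_of_le hT ▸ Icc_subset_Ici_self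
  exact integral_mono_on hT (hz_cont.mono hsub).intervalIntegrable
    ((hq_cont.mono hsub).intervalIntegrable.const_mul _) fun t ht => hz_le t ht.1

theorem stmt6 (a b : ℝ → ℝ) (A b₁ b₂ J : ℝ)
    (hA : 0 < A) (hb₁ : 0 < b₁) (hb₂ : 0 < b₂)
    (ha : ContinuousOn a (Set.Ici (0:ℝ)))
    (hb : ContinuousOn b (Set.Ici (0:ℝ)))
    (haA : ∀ t ≥ (0:ℝ), a t ≤ A)
    (hbB : ∀ t ≥ (0:ℝ), b₁ < b t ∧ b t < b₂)
    (hint : IntegrableOn (fun t => b t * Real.exp (∫ s in (0:ℝ)..t, a s)) (Set.Ioi (0:ℝ)))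
    (hJ : J = ∫ t in Set.Ioi (0:ℝ), b t * Real.exp (∫ s in (0:ℝ)..t, a s))
    (z : ℝ → ℝ)
    (hz : ∀ t ≥ (0:ℝ), z t = Real.exp (∫ s in (0:ℝ)..t, a s) /
      (-J + ∫ s in (0:ℝ)..t, b s * Real.exp (∫ u in (0:ℝ)..s, a u))) :
    Tendsto (fun T => ∫ t in (0:ℝ)..T, z t) atTop atBot :=
  stmt6_general a b b₁ b₂ J hb₁ hb₂ ha hb hbB hint hJ z hz
end

section
/- Let a, b : [0,∞) → ℝ be continuous with a(t) ≤ A and 0 < b₁ < b(t) < b₂ for all t ≥ 0, where A, b₁, b₂ are positive constants. Assume J := ∫₀^∞ b(t) exp(∫₀^t a(s) ds) dt < ∞, that a(t) ≤ 0 for all sufficiently large t, and that a(t) → 0 as t → ∞. Then every differentiable z : [0,∞) → ℝ with z'(t) = a(t)z(t) − b(t)z(t)² for all t ≥ 0 and z(0) ∈ [−1/J, 0) satisfies z(t) → 0 as t → ∞. -/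
open Real Filter MeasureTheory Set intervalIntegral

/-!
Solutions cannot cross `0` from below, since near `0` the equation is dominated by its linear part
`a z` with `a ≤ A`. Once `a` is small, a value `z ≤ -ε` can never recover, because there
`z' < -(b₁/2) z²`; but then `-1/z` decreases at a rate above `b₁/2` while staying positive,
which is impossible on an infinite time interval.
-/

theorem image_le_of_deriv_right_lt_deriv_boundary_Ici {f f' B B' : ℝ → ℝ} {a : ℝ}
    (hf : ∀ t ≥ a, HasDerivWithinAt f (f' t) (Ici a) t) (ha : f a ≤ B a)
    (hB : ∀ t, HasDerivAt B (B' t) t) (bound : ∀ t ≥ a, f t = B t → f' t < B' t) :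
    ∀ t ≥ a, f t ≤ B t := by
  intro t ht
  exact image_le_of_deriv_right_lt_deriv_boundary
    (fun x hx => (hf x hx.1).continuousWithinAt.mono Icc_subset_Ici_self)
    (fun x hx => (hf x hx.1).mono (Ici_subset_Ici.2 hx.1)) ha hB
    (fun x hx => bound x hx.1) ⟨ht, le_rfl⟩

theorem nonpos_of_deriv_le_mul_of_pos {f f' : ℝ → ℝ} {a K : ℝ}
    (hf : ∀ t ≥ a, HasDerivWithinAt f (f' t) (Ici a) t) (ha : f a ≤ 0)
    (hK : ∀ t ≥ a, 0 < f t → f' t ≤ K * f t) : ∀ t ≥ a, f t ≤ 0 := by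
  intro t ht
  refine le_of_forall_pos_le_add fun ε hε => ?_
  -- fence `f` by `δ exp ((K + 1) (s - a))`, whose growth rate beats `K f` wherever `f` touches it
  set δ := ε / exp ((K + 1) * (t - a))
  have hδ : 0 < δ := by positivity
  have hB : ∀ s, HasDerivAt (fun s => δ * exp ((K + 1) * (s - a)))
      ((K + 1) * (δ * exp ((K + 1) * (s - a)))) s := fun s =>
    ((((hasDerivAt_id' s).sub_const a).const_mul (K + 1)).exp.const_mul δ).congr_deriv (by ring)
  have hfence := image_le_of_deriv_right_lt_deriv_boundary_Ici hf
    (by simpa using ha.trans hδ.le) hB fun s hs hfs => by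
      have hpos : 0 < δ * exp ((K + 1) * (s - a)) := by positivity
      have hf's := hK s hs (hfs ▸ hpos)
      rw [hfs] at hf's
      linarith
  simpa [δ] using hfence t ht

theorem exists_nonneg_of_deriv_lt_neg_mul_sq {z z' : ℝ → ℝ} {c t₀ : ℝ} (hc : 0 < c)
    (hz : ∀ t ≥ t₀, HasDerivWithinAt z (z' t) (Ici t₀) t)
    (hz' : ∀ t ≥ t₀, z' t < -c * z t ^ 2) : ∃ t ≥ t₀, 0 ≤ z t := by
  by_contra! hneg
  -- `u = -1/z` is positive but decreases at rate more than `c`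
  have hu : ∀ t ≥ t₀, HasDerivWithinAt (fun s => -(z s)⁻¹) (z' t / z t ^ 2) (Ici t₀) t :=
    fun t ht => ((hz t ht).inv (hneg t ht).ne).neg.congr_deriv (by ring)
  have hB : ∀ t, HasDerivAt (fun s => -(z t₀)⁻¹ - c * (s - t₀)) (-c) t := fun t => by
    simpa using ((hasDerivAt_id t).sub_const t₀).const_mul c |>.const_sub (-(z t₀)⁻¹)
  have hfence := image_le_of_deriv_right_lt_deriv_boundary_Ici hu (by simp) hB fun t ht _ => by
    have hz2 : 0 < z t ^ 2 := by nlinarith [hneg t ht]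
    rw [div_lt_iff₀ hz2]
    linarith [hz' t ht]
  set T := t₀ + -(z t₀)⁻¹ / c
  have hT : t₀ ≤ T :=
    le_add_of_nonneg_right (div_nonneg (by simpa using (hneg t₀ le_rfl).le) hc.le)
  have huT : 0 < -(z T)⁻¹ := by simpa using hneg T hT
  have hBT : -(z t₀)⁻¹ - c * (T - t₀) = 0 := by
    simp only [T]
    field_simp
    ring
  linarith [hfence T hT]

theorem logistic_rhs_lt_neg_half_mul_sq {a b b₁ ε z : ℝ} (hb₁ : 0 < b₁) (hb : b₁ < b)
    (ha : |a| < b₁ * ε / 2) (hz : z ≤ -ε) : a * z - b * z ^ 2 < -(b₁ / 2) * z ^ 2 := by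
  have hε : 0 < ε := by nlinarith [abs_nonneg a]
  nlinarith [mul_nonneg (by linarith : 0 ≤ -z) (neg_le_iff_add_nonneg.1 (neg_abs_le a)),
    mul_lt_mul_of_pos_right ha (by linarith : 0 < -z), mul_le_mul_of_nonneg_left hz hb₁.le,
    mul_le_mul_of_nonneg_right hb.le (sq_nonneg z)]

theorem stmt7_general (a b : ℝ → ℝ) (A b₁ b₂ J : ℝ)
    (hb₁ : 0 < b₁)
    (haA : ∀ t ≥ (0:ℝ), a t ≤ A)
    (hbB : ∀ t ≥ (0:ℝ), b₁ < b t ∧ b t < b₂)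
    (halim : Tendsto a atTop (nhds 0)) :
    ∀ z : ℝ → ℝ,
      (∀ t ≥ (0:ℝ), HasDerivWithinAt z (a t * z t - b t * z t ^ 2) (Set.Ici (0:ℝ)) t) →
      z 0 ∈ Set.Ico (-(1 / J)) 0 →
      Tendsto z atTop (nhds 0) := by
  intro z hz hz0
  have hnonpos : ∀ t ≥ 0, z t ≤ 0 :=
    nonpos_of_deriv_le_mul_of_pos (K := A) hz hz0.2.le fun t ht hpos => by
      nlinarith [haA t ht, (hbB t ht).1, sq_nonneg (z t)]
  refine Metric.tendsto_atTop.2 fun ε hε => ?_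
  obtain ⟨T, hT⟩ := Metric.tendsto_atTop.1 halim (b₁ * ε / 2) (by positivity)
  refine ⟨max T 0, fun t₀ ht₀ => ?_⟩
  obtain ⟨hTt₀, h0t₀⟩ := max_le_iff.1 ht₀
  rw [Real.dist_0_eq_abs, abs_of_nonpos (hnonpos t₀ h0t₀), neg_lt]
  by_contra! hfar
  have hz' : ∀ t ≥ t₀, HasDerivWithinAt z (a t * z t - b t * z t ^ 2) (Ici t₀) t :=
    fun t ht => (hz t (h0t₀.trans ht)).mono (Ici_subset_Ici.2 h0t₀)
  have hrhs : ∀ t ≥ t₀, z t ≤ -ε → a t * z t - b t * z t ^ 2 < -(b₁ / 2) * z t ^ 2 :=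
    fun t ht => logistic_rhs_lt_neg_half_mul_sq hb₁ (hbB t (h0t₀.trans ht)).1
      (by simpa [Real.dist_eq] using hT t (hTt₀.trans ht))
  have hstays : ∀ t ≥ t₀, z t ≤ -ε :=
    image_le_of_deriv_right_lt_deriv_boundary_Ici hz' hfar (fun _ => hasDerivAt_const _ _)
      fun t ht hzt => (hrhs t ht hzt.le).trans_le (by nlinarith [sq_nonneg (z t)])
  obtain ⟨t, ht, hzt⟩ := exists_nonneg_of_deriv_lt_neg_mul_sq (half_pos hb₁) hz'
    fun t ht => hrhs t ht (hstays t ht)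
  linarith [hstays t ht]

theorem stmt7 (a b : ℝ → ℝ) (A b₁ b₂ J : ℝ)
    (hA : 0 < A) (hb₁ : 0 < b₁) (hb₂ : 0 < b₂)
    (ha : ContinuousOn a (Set.Ici (0:ℝ)))
    (hb : ContinuousOn b (Set.Ici (0:ℝ)))
    (haA : ∀ t ≥ (0:ℝ), a t ≤ A)
    (hbB : ∀ t ≥ (0:ℝ), b₁ < b t ∧ b t < b₂)
    (hint : IntegrableOn (fun t => b t * Real.exp (∫ s in (0:ℝ)..t, a s)) (Set.Ioi (0:ℝ)))
    (hJ : J = ∫ t in Set.Ioi (0:ℝ), b t * Real.exp (∫ s in (0:ℝ)..t, a s))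
    (haneg : ∃ t₀ ≥ (0:ℝ), ∀ t ≥ t₀, a t ≤ 0)
    (halim : Tendsto a atTop (nhds 0)) :
    ∀ z : ℝ → ℝ,
      (∀ t ≥ (0:ℝ), HasDerivWithinAt z (a t * z t - b t * z t ^ 2) (Set.Ici (0:ℝ)) t) →
      z 0 ∈ Set.Ico (-(1 / J)) 0 →
      Tendsto z atTop (nhds 0) :=
  stmt7_general a b A b₁ b₂ J hb₁ haA hbB halim
end

section
/- The functions p(t) = 1/2 + 2/(t+5) and p₁(t) = 1/2 − 1/(t+5) are both differentiable solutions on [0,∞) of the equation z'(t) = z(t) − z(t)² − (1/4 − 2/(t+5)²); both are positive and bounded on [0,∞), p(t) > p₁(t) for all t ≥ 0, and ∫₀^∞ (p(t) − p₁(t)) dt = ∞; that is, p and p₁ are two separated positive bounded solutions. -/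
/-!
Both functions have the form `z c t = 1/2 + c/(t+5)`. Since `z (1 - z) = 1/4 - c²/(t+5)²`, the
right-hand side of the equation equals `(2 - c²)/(t+5)²`, while `z' = -c/(t+5)²`; so `z c` is a
solution exactly when `c² = c + 2`, i.e. `c = 2` or `c = -1`. The difference of the two solutions
is `3/(t+5)`, whose integral `3 log((S+5)/5)` diverges.
-/

open Real Filter MeasureTheory Set intervalIntegral

theorem hasDerivAt_const_add_div_add (a b c t : ℝ) (ht : t + b ≠ 0) :
    HasDerivAt (fun t : ℝ => a + c / (t + b)) (-c / (t + b) ^ 2) t := by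
  simpa using ((hasDerivAt_const t c).fun_div ((hasDerivAt_id' t).add_const b) ht).const_add a

theorem hasDerivAt_riccati_of_sq_eq (b c t : ℝ) (hc : c ^ 2 = c + 2) (ht : t + b ≠ 0) :
    HasDerivAt (fun t : ℝ => 1 / 2 + c / (t + b))
      ((1 / 2 + c / (t + b)) - (1 / 2 + c / (t + b)) ^ 2 - (1 / 4 - 2 / (t + b) ^ 2)) t := by
  refine (hasDerivAt_const_add_div_add _ _ _ _ ht).congr_deriv ?_
  generalize t + b = u
  rw [show (1 / 2 + c / u) - (1 / 2 + c / u) ^ 2 - (1 / 4 - 2 / u ^ 2) = (2 - c ^ 2) / u ^ 2 by ring,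
    hc]
  ring

theorem abs_const_add_div_add_le (a c : ℝ) {b t : ℝ} (hb : 0 < b) (ht : 0 ≤ t) :
    |a + c / (t + b)| ≤ |a| + |c| / b := by
  calc |a + c / (t + b)| ≤ |a| + |c| / |t + b| := by rw [← abs_div]; exact abs_add_le _ _
    _ ≤ |a| + |c| / b := by
      rw [abs_of_pos (show 0 < t + b by linarith)]
      gcongr
      linarith

theorem integral_div_add (c : ℝ) {b S : ℝ} (hb : 0 < b) (hS : 0 ≤ S) :
    ∫ t in (0 : ℝ)..S, c / (t + b) = c * log ((S + b) / b) := by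
  simp only [div_eq_mul_inv c, intervalIntegral.integral_const_mul]
  rw [integral_comp_add_right (fun t => t⁻¹), zero_add, integral_inv_of_pos hb (by linarith)]

theorem tendsto_integral_div_add_atTop {b c : ℝ} (hb : 0 < b) (hc : 0 < c) :
    Tendsto (fun S => ∫ t in (0 : ℝ)..S, c / (t + b)) atTop atTop := by
  have hlog : Tendsto (fun S : ℝ => c * log ((S + b) / b)) atTop atTop :=
    (tendsto_log_atTop.comp
      ((tendsto_atTop_add_const_right _ b tendsto_id).atTop_div_const hb)).const_mul_atTop hc
  refine hlog.congr' ?_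
  filter_upwards [eventually_ge_atTop 0] with S hS
  exact (integral_div_add c hb hS).symm

theorem stmt18 :
    (∀ t ≥ (0:ℝ), HasDerivWithinAt (fun t : ℝ => 1/2 + 2/(t+5))
      ((1/2 + 2/(t+5)) - (1/2 + 2/(t+5))^2 - (1/4 - 2/(t+5)^2)) (Set.Ici (0:ℝ)) t) ∧
    (∀ t ≥ (0:ℝ), HasDerivWithinAt (fun t : ℝ => 1/2 - 1/(t+5))
      ((1/2 - 1/(t+5)) - (1/2 - 1/(t+5))^2 - (1/4 - 2/(t+5)^2)) (Set.Ici (0:ℝ)) t) ∧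
    (∀ t ≥ (0:ℝ), 0 < 1/2 + 2/(t+5)) ∧
    (∀ t ≥ (0:ℝ), 0 < 1/2 - 1/(t+5)) ∧
    (∃ M : ℝ, ∀ t ≥ (0:ℝ), |1/2 + 2/(t+5)| ≤ M) ∧
    (∃ M : ℝ, ∀ t ≥ (0:ℝ), |1/2 - 1/(t+5)| ≤ M) ∧
    (∀ t ≥ (0:ℝ), (1/2 + 2/(t+5) : ℝ) > 1/2 - 1/(t+5)) ∧
    Tendsto (fun S => ∫ t in (0:ℝ)..S, (1/2 + 2/(t+5)) - (1/2 - 1/(t+5))) atTop atTop := by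
  have hsub (t : ℝ) : (1 / 2 - 1 / (t + 5) : ℝ) = 1 / 2 + -1 / (t + 5) := by ring
  have hdiff (t : ℝ) : (1 / 2 + 2 / (t + 5)) - (1 / 2 - 1 / (t + 5) : ℝ) = 3 / (t + 5) := by ring
  refine ⟨fun t ht => ?_, fun t ht => ?_, fun t ht => by positivity, fun t ht => ?_,
    ⟨_, fun t ht => abs_const_add_div_add_le _ 2 (by norm_num) ht⟩,
    ⟨_, fun t ht => hsub t ▸ abs_const_add_div_add_le _ (-1) (by norm_num) ht⟩,
    fun t ht => sub_pos.mp (hdiff t ▸ by positivity), ?_⟩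
  · exact (hasDerivAt_riccati_of_sq_eq 5 2 t (by norm_num) (by linarith)).hasDerivWithinAt
  · simp only [hsub]
    exact (hasDerivAt_riccati_of_sq_eq 5 (-1) t (by norm_num) (by linarith)).hasDerivWithinAt
  · rw [sub_pos, div_lt_iff₀ (by linarith)]
    linarith
  · simpa only [hdiff] using tendsto_integral_div_add_atTop (by norm_num : (0 : ℝ) < 5)
      (by norm_num : (0 : ℝ) < 3)
end

section
/- Let k > 1. Then there is no differentiable function z : [0,∞) → ℝ with z'(t) = z(t) − z(t)² − k(1/4 − 2/(t+5)²) for all t ≥ 0; that is, for every k > 1 all solutions of this equation go to −∞ in finite time. -/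
/-!
Writing `w = z - 1/2`, the equation reads `w' = -w² - (k-1)/4 + 2k/(t+5)²`, and once
`2k/(t+5)² ≤ (k-1)/8` this gives `w' ≤ -(w² + s²)` with `s² = (k-1)/8 > 0`. Then
`θ = arctan (w / s)` satisfies `θ' ≤ -s`, so `θ` would have to drop by more than `π` on an
interval of length `π / s`, which is impossible since it takes values in `(-π/2, π/2)`.
-/

open Real Set

theorem not_forall_hasDerivWithinAt_le_neg_sq_add_sq {w w' : ℝ → ℝ} {a s : ℝ} (hs : 0 < s)
    (hw : ∀ t ≥ a, HasDerivWithinAt w (w' t) (Ici a) t)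
    (hle : ∀ t ≥ a, w' t ≤ -(w t ^ 2 + s ^ 2)) : False := by
  have hg : ∀ t ≥ a, HasDerivWithinAt (fun t ↦ arctan (w t / s) + s * t)
      (1 / (1 + (w t / s) ^ 2) * (w' t / s) + s) (Ici a) t := fun t ht ↦ by
    have h := ((hw t ht).div_const s).arctan.add ((hasDerivAt_id' t).const_mul s).hasDerivWithinAt
    rwa [mul_one] at h
  have hg' : ∀ t ≥ a, 1 / (1 + (w t / s) ^ 2) * (w' t / s) + s ≤ 0 := fun t ht ↦ by
    have hpos : 0 < w t ^ 2 + s ^ 2 := by positivity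
    have hsimp : 1 / (1 + (w t / s) ^ 2) * (w' t / s) = s * w' t / (w t ^ 2 + s ^ 2) := by
      field_simp; ring
    rw [hsimp, ← le_neg_iff_add_nonpos_right, div_le_iff₀ hpos]
    nlinarith [hle t ht]
  have hanti : AntitoneOn (fun t ↦ arctan (w t / s) + s * t) (Ici a) := by
    refine antitoneOn_of_hasDerivWithinAt_nonpos (convex_Ici a)
      (f' := fun t ↦ 1 / (1 + (w t / s) ^ 2) * (w' t / s) + s)
      (fun t ht ↦ (hg t ht).continuousWithinAt) (fun t ht ↦ ?_) (fun t ht ↦ ?_)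
    · rw [interior_Ici] at ht ⊢
      exact (hg t (le_of_lt ht)).mono Ioi_subset_Ici_self
    · rw [interior_Ici] at ht
      exact hg' t (le_of_lt ht)
  have hb : a ≤ a + π / s := le_add_of_nonneg_right (by positivity)
  have hdrop := hanti self_mem_Ici hb hb
  simp only [mul_add, mul_div_cancel₀ π hs.ne'] at hdrop
  linarith [arctan_lt_pi_div_two (w a / s), neg_pi_div_two_lt_arctan (w (a + π / s) / s)]

theorem logistic_rhs_le_neg_sq_sub {k t : ℝ} (hk : 1 < k) (ht : 16 * k / (k - 1) ≤ t) (x : ℝ) :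
    x - x ^ 2 - k * (1 / 4 - 2 / (t + 5) ^ 2) ≤ -((x - 1 / 2) ^ 2 + (k - 1) / 8) := by
  have hk1 : 0 < k - 1 := sub_pos.2 hk
  have ht0 : 0 ≤ t := (div_nonneg (by linarith) hk1.le).trans ht
  rw [div_le_iff₀' hk1] at ht
  have hforce : k * (2 / (t + 5) ^ 2) ≤ (k - 1) / 8 := by
    rw [mul_div_assoc', div_le_div_iff₀ (by positivity) (by norm_num)]
    nlinarith
  nlinarith

theorem stmt19 (k : ℝ) (hk : 1 < k) :
    ¬ ∃ z : ℝ → ℝ,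
      ∀ t ≥ (0:ℝ), HasDerivWithinAt z
        (z t - z t ^ 2 - k * (1/4 - 2/(t+5)^2)) (Set.Ici (0:ℝ)) t := by
  rintro ⟨z, hz⟩
  set T := 16 * k / (k - 1)
  have hT : 0 ≤ T := div_nonneg (by linarith) (by linarith)
  have hs : √((k - 1) / 8) ^ 2 = (k - 1) / 8 := sq_sqrt (by linarith)
  refine not_forall_hasDerivWithinAt_le_neg_sq_add_sq (a := T) (w := fun t ↦ z t - 1 / 2)
    (sqrt_pos.2 (by linarith : 0 < (k - 1) / 8))
    (fun t ht ↦ ((hz t (hT.trans ht)).mono (Ici_subset_Ici.2 hT)).sub_const _) (fun t ht ↦ ?_)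
  rw [hs]
  exact logistic_rhs_le_neg_sq_sub hk ht (z t)
end
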